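/- arXiv:2604.26179 — 4 statements merged into one kernel-verified Lean document; each statement's English description precedes it below -/
import Mathlib

section
/- Let α, β ∈ [0,1] and let t, k, n be positive integers with k ≤ n−1. Let 𝒳 be a class of probability distributions on {0,1}^{t(n+1)}, and let 𝒴 be the class of distributions on {0,1}^n of the form addr_{n,t}(X) for X ∈ 𝒳. Suppose Iso: {0,1}^n → {0,1} is an (α, β, k)-isolator for 𝒴. Define the distribution D = (U_1, …, U_t, Iso(U_1), …, Iso(U_t)) on {0,1}^{t(n+1)}, where U_1, …, U_t are independent uniform distributions on {0,1}^n. Then every X ∈ 𝒳 satisfies TV(X, D) ≥ 1 − (1−α)^{t+1} − 2^{−(n−k)}(2t³ + 1) − β. -/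
open Finset

/-- The uniform distribution on a finite type. -/
noncomputable def unif (α : Type*) [Fintype α] : α → ℝ := fun _ => (Fintype.card α : ℝ)⁻¹

/-- `p` is a probability distribution on the finite type `α`. -/
def IsDist {α : Type*} [Fintype α] (p : α → ℝ) : Prop :=
  (∀ a, 0 ≤ p a) ∧ ∑ a, p a = 1

open scoped Classical in
/-- Probability that a sample from `p` lands in the event `E`. -/
noncomputable def prob {α : Type*} [Fintype α] (p : α → ℝ) (E : Set α) : ℝ :=
  ∑ a, if a ∈ E then p a else 0

/-- Total variation distance between two distributions on a finite type. -/
noncomputable def tv {α : Type*} [Fintype α] (p q : α → ℝ) : ℝ :=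
  (∑ a, |p a - q a|) / 2

open scoped Classical in
/-- Pushforward of the distribution `p` under the map `f`. -/
noncomputable def push {α β : Type*} [Fintype α] (f : α → β) (p : α → ℝ) : β → ℝ :=
  fun b => ∑ a, if f a = b then p a else 0

/-- `H∞(p) ≥ k`, i.e. every point has mass at most `2 ^ (-k)`. -/
def MinEntropyGE {α : Type*} (p : α → ℝ) (k : ℝ) : Prop :=
  ∀ a, p a ≤ (2 : ℝ) ^ (-k)

/-- `(a, b, k)`-isolator for the class `𝒳` of distributions on the finite type `α`:
`Iso` outputs `1` with probability at least `a` on the uniform distribution, and for every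
`X ∈ 𝒳`, the probability that a sample of `X` is a light point (mass at most `2^(-k)`)
on which `Iso` outputs `1` is at most `b`. -/
def IsIsolator {α : Type*} [Fintype α] (𝒳 : Set (α → ℝ)) (Iso : α → Bool)
    (a b k : ℝ) : Prop :=
  a ≤ prob (unif α) {x | Iso x = true} ∧
  ∀ X ∈ 𝒳, prob X {x | X x ≤ (2 : ℝ) ^ (-k) ∧ Iso x = true} ≤ b

/-- `(ε, k)`-extractor (outputting `m` bits) for the class `𝒳`. -/
def IsExtractor {α : Type*} [Fintype α] {m : ℕ} (𝒳 : Set (α → ℝ))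
    (Ext : α → Fin m → Bool) (ε k : ℝ) : Prop :=
  ∀ X ∈ 𝒳, MinEntropyGE X k → tv (push Ext X) (unif (Fin m → Bool)) ≤ ε

/-- Output distribution of the randomized addressing function `addr_{n,t}` applied to a
sample of `X` (with fresh uniform randomness when all selector bits are `0`). -/
noncomputable def addrDist (n t : ℕ) (X : ((Fin t → Fin n → Bool) × (Fin t → Bool)) → ℝ) :
    (Fin n → Bool) → ℝ :=
  fun y => ∑ w : (Fin t → Fin n → Bool) × (Fin t → Bool), X w *
    (if h : (Finset.univ.filter (fun i : Fin t => w.2 i = true)).Nonempty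
     then (if w.1 ((Finset.univ.filter (fun i : Fin t => w.2 i = true)).min' h) = y
           then (1 : ℝ) else 0)
     else ((2 : ℝ) ^ n)⁻¹)

/-- The hard distribution `D = (U_1, …, U_t, Iso(U_1), …, Iso(U_t))` on `{0,1}^{t(n+1)}`. -/
noncomputable def Ddist (n t : ℕ) (Iso : (Fin n → Bool) → Bool) :
    ((Fin t → Fin n → Bool) × (Fin t → Bool)) → ℝ :=
  push (fun u : Fin t → Fin n → Bool => (u, fun i => Iso (u i)))
    (unif (Fin t → Fin n → Bool))


/-! Applying the addressing kernel to both `X` and `D` can only decrease total variation, so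
it suffices to separate `Y = addr(X)` from `Q = addr(D)` by one event: the light points accepted
by `Iso`. The isolator gives this event mass at most `β` under `Y`. A sample of `Q` is accepted
by `Iso` unless the `t` blocks and the fresh sample are all rejected, which happens with
probability `(1 - p)^(t+1) ≤ (1 - α)^(t+1)` where `p ≥ α` is the acceptance rate of `Iso`; and it
is heavy with probability at most `t + 1` times the uniform mass of the heavy points, of which
there are at most `2^k`. -/

open scoped Classical

section FiniteProbability

variable {α β : Type*} [Fintype α] [Fintype β]

lemma prob_eq_sum_indicator (p : α → ℝ) (E : Set α) : prob p E = ∑ x, E.indicator p x := rfl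

lemma sum_mul_indicator_one (p : α → ℝ) (E : Set α) : ∑ x, p x * E.indicator 1 x = prob p E := by
  simp [prob_eq_sum_indicator, Set.indicator_apply]

lemma prob_univ (p : α → ℝ) : prob p Set.univ = ∑ x, p x := by
  simp [prob_eq_sum_indicator]

lemma prob_nonneg {p : α → ℝ} (hp : ∀ x, 0 ≤ p x) (E : Set α) : 0 ≤ prob p E :=
  sum_nonneg fun x _ => Set.indicator_nonneg (fun x _ => hp x) x

lemma prob_mono {p : α → ℝ} (hp : ∀ x, 0 ≤ p x) {E F : Set α} (h : E ⊆ F) :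
    prob p E ≤ prob p F :=
  sum_le_sum fun x _ => Set.indicator_le_indicator_of_subset h hp x

lemma prob_union_le {p : α → ℝ} (hp : ∀ x, 0 ≤ p x) (E F : Set α) :
    prob p (E ∪ F) ≤ prob p E + prob p F := by
  simp only [prob_eq_sum_indicator, ← sum_add_distrib]
  refine sum_le_sum fun x _ => ?_
  rw [← Set.indicator_union_add_inter_apply]
  exact le_add_of_nonneg_right (Set.indicator_nonneg (fun x _ => hp x) x)

lemma prob_iUnion_le {ι : Type*} [Fintype ι] {p : α → ℝ} (hp : ∀ x, 0 ≤ p x)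
    (E : ι → Set α) : prob p (⋃ i, E i) ≤ ∑ i, prob p (E i) := by
  simp only [prob_eq_sum_indicator]
  rw [sum_comm]
  refine sum_le_sum fun x _ => ?_
  have hnonneg : ∀ i, 0 ≤ (E i).indicator p x := fun i => Set.indicator_nonneg (fun x _ => hp x) x
  by_cases hx : x ∈ ⋃ i, E i
  · obtain ⟨i, hi⟩ := Set.mem_iUnion.1 hx
    rw [Set.indicator_of_mem hx, ← Set.indicator_of_mem hi p]
    exact single_le_sum (fun i _ => hnonneg i) (mem_univ i)
  · rw [Set.indicator_of_notMem hx]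
    exact sum_nonneg fun i _ => hnonneg i

lemma prob_add_prob_compl (p : α → ℝ) (E : Set α) : prob p E + prob p Eᶜ = ∑ x, p x := by
  simp only [prob_eq_sum_indicator, ← sum_add_distrib, Set.indicator_self_add_compl_apply]

lemma prob_compl {p : α → ℝ} (hp : IsDist p) (E : Set α) : prob p Eᶜ = 1 - prob p E := by
  linarith [prob_add_prob_compl p E, hp.2]

lemma prob_sub_prob_le (p q : α → ℝ) (E : Set α) :
    prob q E - prob p E ≤ prob (fun x => |p x - q x|) E := by
  simp only [prob_eq_sum_indicator, ← sum_sub_distrib]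
  refine sum_le_sum fun x _ => ?_
  by_cases hx : x ∈ E
  · simp only [Set.indicator_of_mem hx]
    exact (le_abs_self _).trans (abs_sub_comm _ _).le
  · simp [Set.indicator_of_notMem hx]

lemma prob_sub_prob_le_tv {p q : α → ℝ} (hp : IsDist p) (hq : IsDist q) (E : Set α) :
    prob q E - prob p E ≤ tv p q := by
  have hE := prob_sub_prob_le p q E
  have hEc := prob_sub_prob_le q p Eᶜ
  simp only [abs_sub_comm (q _)] at hEc
  have := prob_add_prob_compl (fun x => |p x - q x|) E
  rw [prob_compl hp, prob_compl hq] at hEc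
  rw [tv]
  linarith

lemma prob_ite_eq [DecidableEq α] (m : α) (E : Set α) :
    prob (fun y => if m = y then 1 else 0) E = if m ∈ E then 1 else 0 := by
  rw [prob_eq_sum_indicator, sum_eq_single m (fun x _ hx => by simp [Ne.symm hx]) (by simp)]
  by_cases hm : m ∈ E <;> simp [hm]

lemma sum_push_mul (f : α → β) (p : α → ℝ) (g : β → ℝ) :
    ∑ y, push f p y * g y = ∑ x, p x * g (f x) := by
  simp only [push, sum_mul, ite_mul, zero_mul]
  rw [sum_comm]
  simp

lemma isDist_push (f : α → β) {p : α → ℝ} (hp : IsDist p) : IsDist (push f p) :=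
  ⟨fun y => sum_nonneg fun x _ => by split_ifs <;> simp [hp.1 x],
    by simpa [hp.2] using sum_push_mul f p fun _ => 1⟩

lemma isDist_unif [Nonempty α] : IsDist (unif α) := by
  refine ⟨fun _ => by unfold unif; positivity, ?_⟩
  simp [unif]

lemma prob_unif (E : Set α) :
    prob (unif α) E = #(univ.filter (· ∈ E)) / Fintype.card α := by
  rw [prob, ← sum_filter]
  simp [unif, div_eq_mul_inv]

lemma prob_unif_pi {ι : Type*} [Fintype ι] [DecidableEq ι] (E : ι → Set β) :
    prob (unif (ι → β)) {u | ∀ i, u i ∈ E i} = ∏ i, prob (unif β) (E i) := by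
  have hfilter : univ.filter (· ∈ {u : ι → β | ∀ i, u i ∈ E i})
      = Fintype.piFinset fun i => univ.filter (· ∈ E i) := by
    ext u
    simp [Fintype.mem_piFinset]
  rw [prob_unif, filter_congr_decidable, hfilter, Fintype.card_piFinset, Fintype.card_fun]
  simp only [prob_unif, prod_div_distrib, prod_const, card_univ, Nat.cast_prod, Nat.cast_pow]

lemma prob_unif_eval {ι : Type*} [Fintype ι] [DecidableEq ι] [Nonempty β] (i : ι) (E : Set β) :
    prob (unif (ι → β)) {u | u i ∈ E} = prob (unif β) E := by
  have hset : {u : ι → β | u i ∈ E} = {u | ∀ j, u j ∈ if j = i then E else Set.univ} := by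
    ext u
    constructor
    · intro hu j
      split_ifs with hj
      · exact hj ▸ hu
      · trivial
    · intro hu
      simpa using hu i
  rw [hset, prob_unif_pi, prod_eq_single i (fun j _ hj => by rw [if_neg hj, prob_univ, isDist_unif.2])
    (by simp), if_pos rfl]

lemma prob_unif_lt_le {p : α → ℝ} (hp : IsDist p) {c : ℝ} (hc : 0 < c) :
    prob (unif α) {x | c < p x} ≤ (c * Fintype.card α)⁻¹ := by
  set H := univ.filter (· ∈ {x | c < p x})
  have hH : (#H : ℝ) * c ≤ 1 := calc
    (#H : ℝ) * c = ∑ x ∈ H, c := by rw [sum_const, nsmul_eq_mul]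
    _ ≤ ∑ x ∈ H, p x := sum_le_sum fun x hx => (mem_filter.1 hx).2.le
    _ ≤ ∑ x, p x := sum_le_sum_of_subset_of_nonneg (subset_univ _) fun x _ _ => hp.1 x
    _ = 1 := hp.2
  rw [prob_unif, mul_inv, ← div_eq_mul_inv, ← one_div]
  exact div_le_div_of_nonneg_right ((le_div_iff₀ hc).2 hH) (Nat.cast_nonneg _)

end FiniteProbability

section Kernel

variable {α β : Type*} [Fintype α] [Fintype β]

noncomputable def kernelPush (p : α → ℝ) (K : α → β → ℝ) : β → ℝ := fun y => ∑ x, p x * K x y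

lemma prob_kernelPush (p : α → ℝ) (K : α → β → ℝ) (E : Set β) :
    prob (kernelPush p K) E = ∑ x, p x * prob (K x) E := by
  simp only [prob_eq_sum_indicator, mul_sum]
  rw [sum_comm]
  refine sum_congr rfl fun y _ => ?_
  by_cases hy : y ∈ E <;> simp [hy, kernelPush]

lemma isDist_kernelPush {p : α → ℝ} {K : α → β → ℝ} (hp : IsDist p) (hK : ∀ x, IsDist (K x)) :
    IsDist (kernelPush p K) := by
  refine ⟨fun y => sum_nonneg fun x _ => mul_nonneg (hp.1 x) ((hK x).1 y), ?_⟩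
  simp only [kernelPush]
  rw [sum_comm]
  simp [← mul_sum, (hK _).2, hp.2]

lemma tv_kernelPush_le {K : α → β → ℝ} (hK : ∀ x, IsDist (K x)) (p q : α → ℝ) :
    tv (kernelPush p K) (kernelPush q K) ≤ tv p q := by
  have hpoint : ∀ y, |kernelPush p K y - kernelPush q K y| ≤ ∑ x, |p x - q x| * K x y := by
    intro y
    simp only [kernelPush, ← sum_sub_distrib, ← sub_mul]
    refine (abs_sum_le_sum_abs _ _).trans_eq (sum_congr rfl fun x _ => ?_)
    rw [abs_mul, abs_of_nonneg ((hK x).1 y)]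
  unfold tv
  gcongr
  calc ∑ y, |kernelPush p K y - kernelPush q K y|
      ≤ ∑ y, ∑ x, |p x - q x| * K x y := sum_le_sum fun y _ => hpoint y
    _ = ∑ x, |p x - q x| := by
      rw [sum_comm]
      simp [← mul_sum, (hK _).2]

end Kernel

lemma card_bitvec (n : ℕ) : (Fintype.card (Fin n → Bool) : ℝ) = 2 ^ n := by
  simp

lemma prob_unif_bitvec_lt_le {n : ℕ} {p : (Fin n → Bool) → ℝ} (hp : IsDist p) (k : ℝ) :
    prob (unif (Fin n → Bool)) {x | (2 : ℝ) ^ (-k) < p x} ≤ (2 : ℝ) ^ (-((n : ℝ) - k)) := by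
  refine (prob_unif_lt_le hp (by positivity)).trans_eq ?_
  rw [card_bitvec, ← Real.rpow_natCast, ← Real.rpow_add two_pos, ← Real.rpow_neg zero_le_two]
  ring_nf

section Addressing

variable {n t : ℕ}

noncomputable def addrKernel (n t : ℕ) (w : (Fin t → Fin n → Bool) × (Fin t → Bool))
    (y : Fin n → Bool) : ℝ :=
  if h : (univ.filter (fun i : Fin t => w.2 i = true)).Nonempty
  then (if w.1 ((univ.filter (fun i : Fin t => w.2 i = true)).min' h) = y then 1 else 0)
  else ((2 : ℝ) ^ n)⁻¹

lemma addrDist_eq_kernelPush (X : ((Fin t → Fin n → Bool) × (Fin t → Bool)) → ℝ) :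
    addrDist n t X = kernelPush X (addrKernel n t) := rfl

lemma addrKernel_of_exists {w : (Fin t → Fin n → Bool) × (Fin t → Bool)}
    (h : ∃ i, w.2 i = true) :
    ∃ i, w.2 i = true ∧ addrKernel n t w = fun y => if w.1 i = y then 1 else 0 := by
  obtain ⟨i, hi⟩ := h
  have hne : (univ.filter (fun i : Fin t => w.2 i = true)).Nonempty :=
    ⟨i, mem_filter.2 ⟨mem_univ i, hi⟩⟩
  refine ⟨_, (mem_filter.1 (min'_mem _ hne)).2, funext fun y => ?_⟩
  simp only [addrKernel, dif_pos hne]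

lemma addrKernel_of_forall_false {w : (Fin t → Fin n → Bool) × (Fin t → Bool)}
    (h : ∀ i, w.2 i = false) : addrKernel n t w = unif (Fin n → Bool) := by
  have hne : ¬ (univ.filter (fun i : Fin t => w.2 i = true)).Nonempty := by simp [h]
  funext y
  simp only [addrKernel, dif_neg hne, unif, card_bitvec]

lemma prob_addrKernel_le (w : (Fin t → Fin n → Bool) × (Fin t → Bool)) (E : Set (Fin n → Bool)) :
    prob (addrKernel n t w) E ≤ (if ∃ i, w.1 i ∈ E then 1 else 0) + prob (unif _) E := by
  have hunif : 0 ≤ prob (unif (Fin n → Bool)) E := prob_nonneg isDist_unif.1 E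
  by_cases h : ∃ i, w.2 i = true
  · obtain ⟨i, -, hK⟩ := addrKernel_of_exists h
    rw [hK, prob_ite_eq]
    split_ifs with hi hex
    · linarith
    · exact absurd ⟨i, hi⟩ hex
    all_goals linarith
  · simp only [not_exists, Bool.not_eq_true] at h
    rw [addrKernel_of_forall_false h]
    split_ifs <;> linarith

lemma prob_addrKernel_eq_one {w : (Fin t → Fin n → Bool) × (Fin t → Bool)} {E : Set (Fin n → Bool)}
    (h : ∃ i, w.2 i = true) (hE : ∀ i, w.2 i = true → w.1 i ∈ E) :
    prob (addrKernel n t w) E = 1 := by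
  obtain ⟨i, hi, hK⟩ := addrKernel_of_exists h
  rw [hK, prob_ite_eq, if_pos (hE i hi)]

lemma isDist_addrKernel (w : (Fin t → Fin n → Bool) × (Fin t → Bool)) :
    IsDist (addrKernel n t w) := by
  by_cases h : ∃ i, w.2 i = true
  · obtain ⟨i, -, hK⟩ := addrKernel_of_exists h
    rw [hK]
    exact ⟨fun y => by dsimp only; split_ifs <;> norm_num, by simp⟩
  · simp only [not_exists, Bool.not_eq_true] at h
    rw [addrKernel_of_forall_false h]
    exact isDist_unif

end Addressing

section HardDistribution

variable {n t : ℕ} (Iso : (Fin n → Bool) → Bool)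

lemma prob_addrDist_Ddist (E : Set (Fin n → Bool)) :
    prob (addrDist n t (Ddist n t Iso)) E
      = ∑ u, unif (Fin t → Fin n → Bool) u * prob (addrKernel n t (u, fun i => Iso (u i))) E := by
  rw [addrDist_eq_kernelPush, prob_kernelPush, Ddist, sum_push_mul]

lemma prob_addrDist_Ddist_iso :
    prob (addrDist n t (Ddist n t Iso)) {x | Iso x = true}
      = 1 - (1 - prob (unif (Fin n → Bool)) {x | Iso x = true}) ^ (t + 1) := by
  set T : Set (Fin n → Bool) := {x | Iso x = true}
  set A : Set (Fin t → Fin n → Bool) := {u | ∀ i, u i ∈ Tᶜ}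
  have hpoint : ∀ u, prob (addrKernel n t (u, fun i => Iso (u i))) T
      = 1 - (1 - prob (unif _) T) * A.indicator 1 u := by
    intro u
    by_cases h : ∃ i, Iso (u i) = true
    · have hu : u ∉ A := by simpa [A, T] using h
      rw [prob_addrKernel_eq_one h fun i hi => hi, Set.indicator_of_notMem hu]
      ring
    · have hu : u ∈ A := by simpa [A, T] using h
      simp only [not_exists, Bool.not_eq_true] at h
      rw [addrKernel_of_forall_false h, Set.indicator_of_mem hu]
      simp
  have hA : prob (unif _) A = (1 - prob (unif _) T) ^ t := by
    refine (prob_unif_pi fun _ : Fin t => Tᶜ).trans ?_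
    rw [prod_const, card_univ, Fintype.card_fin, prob_compl isDist_unif]
  simp only [prob_addrDist_Ddist, hpoint, mul_sub, mul_one, sum_sub_distrib, isDist_unif.2,
    mul_left_comm _ (1 - prob _ T), ← mul_sum, sum_mul_indicator_one, hA]
  ring

lemma one_sub_pow_le_prob_addrDist_Ddist {a : ℝ} (ha : a ≤ prob (unif _) {x | Iso x = true}) :
    1 - (1 - a) ^ (t + 1) ≤ prob (addrDist n t (Ddist n t Iso)) {x | Iso x = true} := by
  have hcompl := prob_compl (isDist_unif (α := Fin n → Bool)) {x | Iso x = true}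
  have hnonneg := prob_nonneg (isDist_unif (α := Fin n → Bool)).1 {x | Iso x = true}ᶜ
  rw [prob_addrDist_Ddist_iso]
  gcongr
  linarith

lemma prob_addrDist_Ddist_le (E : Set (Fin n → Bool)) :
    prob (addrDist n t (Ddist n t Iso)) E ≤ (t + 1) * prob (unif (Fin n → Bool)) E := by
  set μ := unif (Fin t → Fin n → Bool)
  have hpoint : ∀ u, μ u * prob (addrKernel n t (u, fun i => Iso (u i))) E
      ≤ μ u * (⋃ i, {u : Fin t → Fin n → Bool | u i ∈ E}).indicator 1 u
        + μ u * prob (unif _) E := by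
    intro u
    rw [← mul_add]
    refine mul_le_mul_of_nonneg_left ((prob_addrKernel_le _ E).trans_eq ?_) (isDist_unif.1 u)
    simp [Set.indicator_apply]
  calc prob (addrDist n t (Ddist n t Iso)) E
      ≤ ∑ u, (μ u * (⋃ i, {u : Fin t → Fin n → Bool | u i ∈ E}).indicator 1 u
        + μ u * prob (unif _) E) := by
        rw [prob_addrDist_Ddist]
        exact sum_le_sum fun u _ => hpoint u
    _ = prob μ (⋃ i, {u : Fin t → Fin n → Bool | u i ∈ E}) + prob (unif _) E := by
        rw [sum_add_distrib, sum_mul_indicator_one, ← sum_mul, isDist_unif.2, one_mul]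
    _ ≤ ∑ i : Fin t, prob μ {u | u i ∈ E} + prob (unif _) E := by
        gcongr
        exact prob_iUnion_le isDist_unif.1 _
    _ = (t + 1) * prob (unif (Fin n → Bool)) E := by
        simp [μ, prob_unif_eval]
        ring

end HardDistribution

theorem stmt0_general (a b : ℝ)
    (t k n : ℕ)
    (𝒳 : Set (((Fin t → Fin n → Bool) × (Fin t → Bool)) → ℝ))
    (h𝒳 : ∀ X ∈ 𝒳, IsDist X)
    (Iso : (Fin n → Bool) → Bool)
    (hIso : IsIsolator {Y | ∃ X ∈ 𝒳, Y = addrDist n t X} Iso a b k)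
    (X : ((Fin t → Fin n → Bool) × (Fin t → Bool)) → ℝ) (hX : X ∈ 𝒳) :
    1 - (1 - a) ^ (t + 1) - (2 : ℝ) ^ (-((n : ℝ) - (k : ℝ))) * (2 * (t : ℝ) ^ 3 + 1) - b
      ≤ tv X (Ddist n t Iso) := by
  set Y := addrDist n t X
  set Q := addrDist n t (Ddist n t Iso)
  set T : Set (Fin n → Bool) := {x | Iso x = true}
  set S : Set (Fin n → Bool) := {x | Y x ≤ (2 : ℝ) ^ (-(k : ℝ)) ∧ Iso x = true}
  set H : Set (Fin n → Bool) := {x | (2 : ℝ) ^ (-(k : ℝ)) < Y x}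
  have hY : IsDist Y := isDist_kernelPush (h𝒳 X hX) isDist_addrKernel
  have hQ : IsDist Q := isDist_kernelPush (isDist_push _ isDist_unif) isDist_addrKernel
  have hdata : tv Y Q ≤ tv X (Ddist n t Iso) := tv_kernelPush_le isDist_addrKernel X _
  have hlight : prob Q T ≤ prob Q S + prob Q H := by
    refine (prob_mono hQ.1 fun x hx => ?_).trans (prob_union_le hQ.1 S H)
    exact (le_or_gt (Y x) _).imp (fun h => ⟨h, hx⟩) id
  have hiso : 1 - (1 - a) ^ (t + 1) ≤ prob Q T := one_sub_pow_le_prob_addrDist_Ddist Iso hIso.1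
  have ht : (t : ℝ) + 1 ≤ 2 * t ^ 3 + 1 := by
    have : t ≤ 2 * t ^ 3 := (Nat.le_self_pow three_ne_zero t).trans (Nat.le_mul_of_pos_left _ two_pos)
    exact_mod_cast Nat.add_le_add_right this 1
  have hheavy : prob Q H ≤ (2 * t ^ 3 + 1) * (2 : ℝ) ^ (-((n : ℝ) - (k : ℝ))) :=
    (prob_addrDist_Ddist_le Iso H).trans <| mul_le_mul ht (prob_unif_bitvec_lt_le hY k)
      (prob_nonneg isDist_unif.1 H) (by positivity)
  linarith [prob_sub_prob_le_tv hY hQ S, hIso.2 Y ⟨X, hX, rfl⟩]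

theorem stmt0 (a b : ℝ) (ha : a ∈ Set.Icc (0 : ℝ) 1) (hb : b ∈ Set.Icc (0 : ℝ) 1)
    (t k n : ℕ) (ht : 0 < t) (hk : 0 < k) (hn : 0 < n) (hkn : k + 1 ≤ n)
    (𝒳 : Set (((Fin t → Fin n → Bool) × (Fin t → Bool)) → ℝ))
    (h𝒳 : ∀ X ∈ 𝒳, IsDist X)
    (Iso : (Fin n → Bool) → Bool)
    (hIso : IsIsolator {Y | ∃ X ∈ 𝒳, Y = addrDist n t X} Iso a b k)
    (X : ((Fin t → Fin n → Bool) × (Fin t → Bool)) → ℝ) (hX : X ∈ 𝒳) :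
    1 - (1 - a) ^ (t + 1) - (2 : ℝ) ^ (-((n : ℝ) - (k : ℝ))) * (2 * (t : ℝ) ^ 3 + 1) - b
      ≤ tv X (Ddist n t Iso) :=
  stmt0_general a b t k n 𝒳 h𝒳 Iso hIso X hX
end

section
/- For any probability distribution X on {0,1}^n and any positive integer k, there exists a function S: {0,1}^n → {0,1}^{k+1} with the following property: for every x ∈ {0,1}^n such that Pr[X = x] ≤ 2^{−k}, we have Pr[S(X) = S(x)] ≤ 2^{−k}, where S(X) denotes the pushforward of X under S. -/
open Finset

/-! Greedy bin packing with bins of capacity `c = 2^{-(k+1)}` and `2^(k+1)` labels: repeatedly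
split off a set of mass at least `c` which is either a single point or has mass below `2c`.
Each split consumes one label and at least `c` of the total mass `1 = 2^(k+1) c`, so the labels
never run out, and a light point (mass at most `2c = 2^{-k}`) always ends up in a class of mass
at most `2c`. -/

theorem Finset.exists_subset_le_sum_le_max {α : Type*} (s : Finset α) (w : α → ℝ) {c : ℝ}
    (hs : c ≤ ∑ x ∈ s, w x) :
    ∃ t ⊆ s, c ≤ ∑ x ∈ t, w x ∧ ∀ x ∈ t, ∑ y ∈ t, w y ≤ max (w x) (2 * c) := by
  classical
  induction s using Finset.induction_on with
  | empty => exact ⟨∅, subset_rfl, hs, by simp⟩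
  | insert a s ha ih =>
    rw [sum_insert ha] at hs
    by_cases hrest : c ≤ ∑ x ∈ s, w x
    · obtain ⟨t, hts, ht⟩ := ih hrest
      exact ⟨t, hts.trans (subset_insert a s), ht⟩
    by_cases hpoint : c ≤ w a
    · exact ⟨{a}, by simp, by simpa using hpoint, by simp⟩
    · refine ⟨insert a s, subset_rfl, by rwa [sum_insert ha], fun x _ => ?_⟩
      rw [sum_insert ha]
      exact le_max_of_le_right (by linarith)

theorem Finset.exists_fin_labeling_sum_fiber_le {α : Type*} (s : Finset α) (w : α → ℝ) {c : ℝ}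
    (hc : 0 ≤ c) (N : ℕ) (hs : ∑ x ∈ s, w x ≤ (N + 1) * c) :
    ∃ f : α → Fin (N + 1), ∀ x ∈ s, ∑ y ∈ s with f y = f x, w y ≤ max (w x) (2 * c) := by
  classical
  induction N generalizing s with
  | zero =>
    refine ⟨fun _ => 0, fun x _ => ?_⟩
    simp only [filter_true, Nat.cast_zero, zero_add, one_mul] at hs ⊢
    exact le_max_of_le_right (by linarith)
  | succ N ih =>
    by_cases hfits : ∑ x ∈ s, w x ≤ (N + 1) * c
    · obtain ⟨f, hf⟩ := ih s hfits
      exact ⟨fun y => (f y).castSucc, by simpa only [Fin.castSucc_inj] using hf⟩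
    push_cast at hs hfits
    obtain ⟨t, hts, hct, ht⟩ := s.exists_subset_le_sum_le_max w (c := c) (by nlinarith)
    obtain ⟨f, hf⟩ := ih (s \ t) (by rw [sum_sdiff_eq_sub hts]; linarith)
    let g : α → Fin (N + 2) := fun y => if y ∈ t then Fin.last (N + 1) else (f y).castSucc
    have hfiber_t : ∀ x ∈ t, {y ∈ s | g y = g x} = t := by
      intro x hxt
      ext y
      by_cases hyt : y ∈ t
      · simp [g, hxt, hyt, hts hyt]
      · simp [g, hxt, hyt, Fin.castSucc_ne_last]
    have hfiber_rest : ∀ x ∉ t, {y ∈ s | g y = g x} = {y ∈ s \ t | f y = f x} := by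
      intro x hxt
      ext y
      by_cases hyt : y ∈ t <;> simp [g, hxt, hyt, (Fin.castSucc_ne_last _).symm]
    refine ⟨g, fun x hx => ?_⟩
    by_cases hxt : x ∈ t
    · rw [hfiber_t x hxt]
      exact ht x hxt
    · rw [hfiber_rest x hxt]
      exact hf x (mem_sdiff.mpr ⟨hx, hxt⟩)

theorem Finset.exists_labeling_sum_fiber_le {α β : Type*} [Fintype β] [DecidableEq β] [Nonempty β]
    (s : Finset α) (w : α → ℝ) {c : ℝ} (hc : 0 ≤ c) (hs : ∑ x ∈ s, w x ≤ Fintype.card β * c) :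
    ∃ f : α → β, ∀ x ∈ s, ∑ y ∈ s with f y = f x, w y ≤ max (w x) (2 * c) := by
  obtain ⟨N, hN⟩ := Nat.exists_eq_succ_of_ne_zero (Fintype.card_ne_zero (α := β))
  rw [hN, Nat.cast_succ] at hs
  obtain ⟨f, hf⟩ := s.exists_fin_labeling_sum_fiber_le w hc N hs
  let e := (Fintype.equivFinOfCardEq hN).symm
  exact ⟨fun y => e (f y), by simpa only [e.injective.eq_iff] using hf⟩

theorem stmt4_general (n k : ℕ)
    (X : (Fin n → Bool) → ℝ) (hX : IsDist X) :
    ∃ S : (Fin n → Bool) → (Fin (k + 1) → Bool),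
      ∀ x : Fin n → Bool, X x ≤ ((2 : ℝ) ^ k)⁻¹ →
        prob X {y | S y = S x} ≤ ((2 : ℝ) ^ k)⁻¹ := by
  have htotal : ∑ x, X x ≤ Fintype.card (Fin (k + 1) → Bool) * (((2 : ℝ) ^ k)⁻¹ / 2) := by
    rw [hX.2, Fintype.card_fun, Fintype.card_bool, Fintype.card_fin]
    field_simp
    norm_num [pow_succ]
  obtain ⟨S, hS⟩ := univ.exists_labeling_sum_fiber_le X (by positivity) htotal
  refine ⟨S, fun x hx => ?_⟩
  calc prob X {y | S y = S x} = ∑ y with S y = S x, X y := by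
        rw [prob, sum_filter]; convert rfl using 3 with y; exact Iff.rfl
    _ ≤ max (X x) (2 * (((2 : ℝ) ^ k)⁻¹ / 2)) := hS x (mem_univ x)
    _ = ((2 : ℝ) ^ k)⁻¹ := by rw [mul_div_cancel₀ _ two_ne_zero, max_eq_right hx]

theorem stmt4 (n k : ℕ) (hk : 0 < k)
    (X : (Fin n → Bool) → ℝ) (hX : IsDist X) :
    ∃ S : (Fin n → Bool) → (Fin (k + 1) → Bool),
      ∀ x : Fin n → Bool, X x ≤ ((2 : ℝ) ^ k)⁻¹ →
        prob X {y | S y = S x} ≤ ((2 : ℝ) ^ k)⁻¹ :=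
  stmt4_general n k X hX
end

section
/- Let f: 𝔽₂^r → 𝔽₂^n be any function and let 0 < ε < 1/4. Let ℓ = ⌈n + 3·log₂(1/ε)⌉. If r > ℓ, then there exist a matrix A ∈ 𝔽₂^{r×ℓ} and a vector b ∈ 𝔽₂^r such that the function h: 𝔽₂^ℓ → 𝔽₂^n defined by h(x) = f(Ax + b) satisfies TV(f(U^r), h(U^ℓ)) ≤ 2ε, where U^r and U^ℓ denote the uniform distributions on 𝔽₂^r and 𝔽₂^ℓ respectively and f(U^r), h(U^ℓ) denote pushforward distributions. -/
/-!
Pick `(A, b)` uniformly at random. The points `A x + b`, `x ∈ 𝔽₂^ℓ`, are uniform and pairwise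
independent, so for each `y` the fraction of `x` with `f (A x + b) = y` has mean
`p_y = Pr[f(U^r) = y]` and variance at most `p_y / 2^ℓ`. By Cauchy–Schwarz the expected
`ℓ¹` distance between the two output distributions is at most `∑ y, √(p_y / 2^ℓ) ≤ √(2^n / 2^ℓ)`,
which the choice of `ℓ` makes at most `ε^(3/2)`; some `(A, b)` does at least as well as average.
-/

open Finset

open scoped BigOperators Matrix

lemma Fintype.expect_prod_type {ι κ M : Type*} [Fintype ι] [Fintype κ] [AddCommMonoid M]
    [Module ℚ≥0 M] (f : ι × κ → M) : 𝔼 x, f x = 𝔼 i, 𝔼 j, f (i, j) := by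
  rw [← Finset.univ_product_univ, Finset.expect_product]

lemma expect_comp_add_left {G M : Type*} [AddGroup G] [Fintype G] [AddCommMonoid M]
    [Module ℚ≥0 M] (c : G) (k : G → M) : 𝔼 g, k (c + g) = 𝔼 g, k g :=
  Fintype.expect_equiv (Equiv.addLeft c) _ _ fun _ => rfl

lemma AddMonoidHom.expect_comp_of_surjective {G H M : Type*} [AddCommGroup G] [Fintype G]
    [AddCommGroup H] [Fintype H] [AddCommMonoid M] [Module ℚ≥0 M] (φ : G →+ H)
    (hφ : Function.Surjective φ) (k : H → M) :
    𝔼 g, k (φ g) = 𝔼 v, k v := by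
  have hshift (v : H) : 𝔼 g, k (φ g) = 𝔼 g, k (φ g + v) := by
    obtain ⟨g₀, rfl⟩ := hφ v
    exact Fintype.expect_equiv (Equiv.subRight g₀) _ _ fun g => by simp
  calc 𝔼 g, k (φ g) = 𝔼 v, 𝔼 g, k (φ g + v) := by
        simp only [← hshift, Fintype.expect_const]
    _ = 𝔼 g, 𝔼 v, k (φ g + v) := Finset.expect_comm _ _ _
    _ = 𝔼 v, k v := by
      simp only [fun g => expect_comp_add_left (φ g) k, Fintype.expect_const]

lemma expect_abs_le_sqrt_expect_sq {ι : Type*} (s : Finset ι) (f : ι → ℝ) :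
    𝔼 i ∈ s, |f i| ≤ √(𝔼 i ∈ s, f i ^ 2) := by
  rcases s.eq_empty_or_nonempty with rfl | hs
  · simp
  refine Real.le_sqrt_of_sq_le ?_
  simpa [Finset.expect_const hs, sq_abs] using Finset.expect_mul_sq_le_sq_mul_sq s (|f ·|) 1

lemma sum_sqrt_le_sqrt_card_mul_sum {ι : Type*} (s : Finset ι) {f : ι → ℝ} (hf : ∀ i, 0 ≤ f i) :
    ∑ i ∈ s, √(f i) ≤ √(s.card * ∑ i ∈ s, f i) := by
  simpa [mul_comm] using Real.sum_sqrt_mul_sqrt_le s hf fun _ => zero_le_one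

lemma Matrix.mulVec_left_surjective {m n K : Type*} [Fintype n] [DecidableEq n] [Field K]
    {d : n → K} (hd : d ≠ 0) : Function.Surjective fun A : Matrix m n K => A *ᵥ d := by
  obtain ⟨j, hj⟩ := Function.ne_iff.mp hd
  intro v
  refine ⟨vecMulVec v (Pi.single j (d j)⁻¹), ?_⟩
  simp [vecMulVec_mulVec, single_dotProduct, inv_mul_cancel₀ hj]

lemma push_unif_apply {α β : Type*} [Fintype α] [DecidableEq β] (f : α → β) (b : β) :
    push f (unif α) b = 𝔼 a, if f a = b then 1 else 0 := by
  simp only [push, unif, Fintype.expect_eq_sum_div_card, Finset.sum_div, ite_div, zero_div,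
    one_div]
  congr!

lemma sum_push {α β : Type*} [Fintype α] [Fintype β] (f : α → β) (p : α → ℝ) :
    ∑ b, push f p b = ∑ a, p a := by
  classical
  simp only [push]
  rw [Finset.sum_comm]
  simp

lemma sum_unif (α : Type*) [Fintype α] [Nonempty α] : ∑ a, unif α a = 1 := by
  simp [unif]

/-- For `t` uniform on `T`, each value `h t x` is uniform on `Y`, and the values at two distinct
points are independent. -/
structure IsPairwiseIndependent {T X Y : Type*} [Fintype T] [Fintype Y] (h : T → X → Y) :
    Prop where
  expect_comp : ∀ x (g : Y → ℝ), 𝔼 t, g (h t x) = 𝔼 y, g y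
  expect_comp₂ : ∀ x x', x ≠ x' → ∀ g : Y → Y → ℝ, 𝔼 t, g (h t x) (h t x') = 𝔼 y, 𝔼 y', g y y'

theorem isPairwiseIndependent_mulVec_add {m n K : Type*} [Fintype m] [DecidableEq m]
    [Fintype n] [DecidableEq n] [Field K] [Fintype K] :
    IsPairwiseIndependent fun (t : Matrix m n K × (m → K)) x => t.1 *ᵥ x + t.2 where
  expect_comp x g := by
    simp only [Fintype.expect_prod_type, expect_comp_add_left, Fintype.expect_const]
  expect_comp₂ x x' hx g := by
    have hd : x' - x ≠ 0 := sub_ne_zero.mpr hx.symm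
    calc 𝔼 t : Matrix m n K × (m → K), g (t.1 *ᵥ x + t.2) (t.1 *ᵥ x' + t.2)
        = 𝔼 A : Matrix m n K, 𝔼 u, g u (u + A *ᵥ (x' - x)) := by
          rw [Fintype.expect_prod_type]
          refine Finset.expect_congr rfl fun A _ => ?_
          rw [← expect_comp_add_left (A *ᵥ x) fun u => g u (u + A *ᵥ (x' - x))]
          simp only [Matrix.mulVec_sub, add_right_comm _ _ (A *ᵥ x' - A *ᵥ x), add_sub_cancel]
      _ = 𝔼 u, 𝔼 v, g u (u + v) := by
          rw [Finset.expect_comm]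
          exact Finset.expect_congr rfl fun u _ =>
            (Matrix.mulVec.addMonoidHomLeft (x' - x)).expect_comp_of_surjective
              (Matrix.mulVec_left_surjective hd) (fun v => g u (u + v))
      _ = 𝔼 y, 𝔼 y', g y y' :=
          Finset.expect_congr rfl fun u _ => expect_comp_add_left u (g u)

namespace IsPairwiseIndependent

variable {T X Y Z : Type*} [Fintype T] [Fintype Y] {h : T → X → Y}

lemma expect_comp_mul_comp [DecidableEq X] (hh : IsPairwiseIndependent h) (g : Y → ℝ)
    (x x' : X) :
    𝔼 t, g (h t x) * g (h t x') =
      (𝔼 y, g y) ^ 2 + if x = x' then 𝔼 y, g y ^ 2 - (𝔼 y, g y) ^ 2 else 0 := by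
  split_ifs with hx
  · subst hx
    simp only [← sq, hh.expect_comp x fun y => g y ^ 2]
    ring
  · rw [add_zero, sq, Fintype.expect_mul_expect]
    exact hh.expect_comp₂ x x' hx fun y y' => g y * g y'

variable [Fintype X] [Nonempty X]

lemma expect_expect_comp (hh : IsPairwiseIndependent h) (g : Y → ℝ) :
    𝔼 t, 𝔼 x, g (h t x) = 𝔼 y, g y := by
  rw [Finset.expect_comm]
  simp only [hh.expect_comp, Fintype.expect_const]

lemma expect_sq_expect_comp (hh : IsPairwiseIndependent h) (g : Y → ℝ) :
    𝔼 t, (𝔼 x, g (h t x)) ^ 2 =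
      (𝔼 y, g y) ^ 2 + (𝔼 y, g y ^ 2 - (𝔼 y, g y) ^ 2) / Fintype.card X := by
  classical
  calc 𝔼 t, (𝔼 x, g (h t x)) ^ 2 = 𝔼 x, 𝔼 x', 𝔼 t, g (h t x) * g (h t x') := by
        simp only [sq, Fintype.expect_mul_expect]
        rw [Finset.expect_comm]
        exact Finset.expect_congr rfl fun x _ => Finset.expect_comm _ _ _
    _ = _ := by
      simp only [hh.expect_comp_mul_comp, Finset.expect_add_distrib, Fintype.expect_ite_eq,
        Fintype.expect_const, NNRat.smul_def, NNRat.cast_inv, NNRat.cast_natCast, div_eq_inv_mul]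

variable [Nonempty T]

lemma expect_sq_expect_comp_sub (hh : IsPairwiseIndependent h) (g : Y → ℝ) :
    𝔼 t, (𝔼 x, g (h t x) - 𝔼 y, g y) ^ 2 =
      (𝔼 y, g y ^ 2 - (𝔼 y, g y) ^ 2) / Fintype.card X := by
  simp only [sub_sq, Finset.expect_add_distrib, Finset.expect_sub_distrib, ← Finset.expect_mul,
    ← Finset.mul_expect, hh.expect_sq_expect_comp, hh.expect_expect_comp, Fintype.expect_const]
  ring

lemma expect_abs_push_sub_le (hh : IsPairwiseIndependent h) (f : Y → Z) (z : Z) :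
    𝔼 t, |push f (unif Y) z - push (fun x => f (h t x)) (unif X) z| ≤
      √(push f (unif Y) z / Fintype.card X) := by
  classical
  set g : Y → ℝ := fun y => if f y = z then 1 else 0
  have hg (y : Y) : g y ^ 2 = g y := by by_cases hy : f y = z <;> simp [g, hy]
  simp only [push_unif_apply]
  calc 𝔼 t, |𝔼 y, g y - 𝔼 x, g (h t x)| = 𝔼 t, |𝔼 x, g (h t x) - 𝔼 y, g y| := by
        simp only [abs_sub_comm]
    _ ≤ √(𝔼 t, (𝔼 x, g (h t x) - 𝔼 y, g y) ^ 2) := expect_abs_le_sqrt_expect_sq _ _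
    _ = √((𝔼 y, g y - (𝔼 y, g y) ^ 2) / Fintype.card X) := by
        simp only [hh.expect_sq_expect_comp_sub, hg]
    _ ≤ √((𝔼 y, g y) / Fintype.card X) := by gcongr; exact sub_le_self _ (sq_nonneg (𝔼 y, g y))

theorem exists_sum_abs_push_sub_le [Fintype Z] (hh : IsPairwiseIndependent h) (f : Y → Z) :
    ∃ t, ∑ z, |push f (unif Y) z - push (fun x => f (h t x)) (unif X) z| ≤
      √(Fintype.card Z / Fintype.card X) := by
  classical
  have : Nonempty Y := ⟨h (Classical.arbitrary T) (Classical.arbitrary X)⟩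
  have hp (z : Z) : 0 ≤ push f (unif Y) z := by rw [push_unif_apply]; positivity
  have hp1 : ∑ z, push f (unif Y) z = 1 := by rw [sum_push, sum_unif]
  suffices 𝔼 t, ∑ z, |push f (unif Y) z - push (fun x => f (h t x)) (unif X) z| ≤
      √(Fintype.card Z / Fintype.card X) by
    obtain ⟨t, -, ht⟩ := Finset.exists_le_of_expect_le Finset.univ_nonempty this
    exact ⟨t, ht⟩
  calc _ = ∑ z, 𝔼 t, |push f (unif Y) z - push (fun x => f (h t x)) (unif X) z| :=
        Finset.expect_sum_comm _ _ _
    _ ≤ ∑ z, √(push f (unif Y) z / Fintype.card X) :=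
        Finset.sum_le_sum fun z _ => hh.expect_abs_push_sub_le f z
    _ = (∑ z, √(push f (unif Y) z)) / √(Fintype.card X) := by
        simp only [Real.sqrt_div' _ (Nat.cast_nonneg _), Finset.sum_div]
    _ ≤ √(Fintype.card Z * ∑ z, push f (unif Y) z) / √(Fintype.card X) := by
        gcongr; exact sum_sqrt_le_sqrt_card_mul_sum _ hp
    _ = √(Fintype.card Z / Fintype.card X) := by
        rw [hp1, mul_one, Real.sqrt_div' _ (Nat.cast_nonneg _)]

end IsPairwiseIndependent

lemma two_pow_div_two_pow_le_pow_three {n ℓ : ℕ} {ε : ℝ} (hε : 0 < ε)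
    (hℓ : (n : ℝ) + 3 * Real.logb 2 (1 / ε) ≤ ℓ) : (2 : ℝ) ^ n / 2 ^ ℓ ≤ ε ^ 3 := by
  have hexp : (n : ℝ) - ℓ ≤ Real.logb 2 (ε ^ 3) := by
    rw [Real.logb_pow, one_div, Real.logb_inv] at *
    push_cast
    linarith
  calc (2 : ℝ) ^ n / 2 ^ ℓ = 2 ^ ((n : ℝ) - ℓ) := by
        rw [Real.rpow_sub two_pos, Real.rpow_natCast, Real.rpow_natCast]
    _ ≤ 2 ^ Real.logb 2 (ε ^ 3) := Real.rpow_le_rpow_of_exponent_le one_le_two hexp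
    _ = ε ^ 3 := Real.rpow_logb two_pos (by norm_num) (by positivity)

theorem stmt5_general (r n : ℕ) (f : (Fin r → ZMod 2) → (Fin n → ZMod 2)) (ε : ℝ)
    (hε : 0 < ε) (hε' : ε < 1 / 4)
    (ℓ : ℕ) (hℓ : ℓ = ⌈(n : ℝ) + 3 * Real.logb 2 (1 / ε)⌉₊) :
    ∃ (A : Matrix (Fin r) (Fin ℓ) (ZMod 2)) (b : Fin r → ZMod 2),
      tv (push f (unif (Fin r → ZMod 2)))
         (push (fun x => f (A.mulVec x + b)) (unif (Fin ℓ → ZMod 2))) ≤ 2 * ε := by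
  obtain ⟨⟨A, b⟩, hAb⟩ := (isPairwiseIndependent_mulVec_add (m := Fin r) (n := Fin ℓ)
    (K := ZMod 2)).exists_sum_abs_push_sub_le f
  refine ⟨A, b, ?_⟩
  have hcard : (Fintype.card (Fin n → ZMod 2) : ℝ) / Fintype.card (Fin ℓ → ZMod 2) ≤ ε ^ 2 := by
    simp only [Fintype.card_fun, ZMod.card, Fintype.card_fin, Nat.cast_pow, Nat.cast_ofNat]
    calc (2 : ℝ) ^ n / 2 ^ ℓ ≤ ε ^ 3 := two_pow_div_two_pow_le_pow_three hε (hℓ ▸ Nat.le_ceil _)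
      _ ≤ ε ^ 2 := pow_le_pow_of_le_one hε.le (by linarith) (by norm_num)
  have hsqrt := (Real.sqrt_le_sqrt hcard).trans_eq (Real.sqrt_sq hε.le)
  rw [tv]
  linarith

theorem stmt5 (r n : ℕ) (f : (Fin r → ZMod 2) → (Fin n → ZMod 2)) (ε : ℝ)
    (hε : 0 < ε) (hε' : ε < 1 / 4)
    (ℓ : ℕ) (hℓ : ℓ = ⌈(n : ℝ) + 3 * Real.logb 2 (1 / ε)⌉₊)
    (hr : ℓ < r) :
    ∃ (A : Matrix (Fin r) (Fin ℓ) (ZMod 2)) (b : Fin r → ZMod 2),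
      tv (push f (unif (Fin r → ZMod 2)))
         (push (fun x => f (A.mulVec x + b)) (unif (Fin ℓ → ZMod 2))) ≤ 2 * ε :=
  stmt5_general r n f ε hε hε' ℓ hℓ
end

section
/- There exists a universal constant C > 0 such that the following holds. If 𝒳 is a class of probability distributions on {0,1}^n with |𝒳| = M and M ≥ 2, then there exists a nonempty subset S ⊆ {0,1}^n such that the uniform distribution D on S satisfies TV(X, D) ≥ 1 − C·(log₂(M)/2^n)^{1/3} for every X ∈ 𝒳. -/
open Finset

/-!
Keep each point of `{0,1}^n` independently with probability `p = 2s/2^n`, where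
`s ≈ √(2^n log₂ M)`. For a fixed `X`, the mass `X` puts on the random set `S`, truncated at `1/s`
per point, is a sum of independent terms in `[0, 1/s]` with mean at most `p`, so its exponential
moment at parameter `s` is at most `exp (2ps)`; also `E[2^(s - |S|)] ≤ (2/e)^s`. Averaging one
potential that adds these quantities over all `X ∈ 𝒳` yields a set `S` with `|S| ≥ s` on which
every `X` has truncated mass `O(√(log₂ M / 2^n))`. Since
`TV(X, U_S) = 1 - ∑_{x ∈ S} min (X x) (1/|S|)`, this proves the bound even with a square root in
place of the cube root.
-/

noncomputable def unifOn {α : Type*} [DecidableEq α] (S : Finset α) : α → ℝ :=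
  fun x => if x ∈ S then (S.card : ℝ)⁻¹ else 0

theorem tv_nonneg {α : Type*} [Fintype α] (p q : α → ℝ) : 0 ≤ tv p q :=
  div_nonneg (sum_nonneg fun _ _ => abs_nonneg _) zero_le_two

theorem tv_unifOn_eq {α : Type*} [Fintype α] [DecidableEq α] {X : α → ℝ} (hX : IsDist X)
    {S : Finset α} (hS : S.Nonempty) :
    tv X (unifOn S) = 1 - ∑ x ∈ S, min (X x) (S.card : ℝ)⁻¹ := by
  have hmin : ∀ x, min (X x) (unifOn S x) = if x ∈ S then min (X x) (S.card : ℝ)⁻¹ else 0 := by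
    intro x
    unfold unifOn
    split_ifs
    · rfl
    · exact min_eq_right (hX.1 x)
  have hunif : ∑ x, unifOn S x = 1 := by
    simp only [unifOn, sum_ite_mem, univ_inter, sum_const, nsmul_eq_mul]
    exact mul_inv_cancel₀ (Nat.cast_ne_zero.2 hS.card_pos.ne' : (S.card : ℝ) ≠ 0)
  have habs : ∀ a b : ℝ, |a - b| = a + b - 2 * min a b := fun a b => by
    rw [abs_sub_comm, ← max_sub_min_eq_abs]
    linarith [min_add_max a b]
  simp only [tv, habs, sum_sub_distrib, sum_add_distrib, ← mul_sum, hX.2, hunif, hmin,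
    sum_ite_mem, univ_inter]
  ring

theorem exists_le_sum_mul_of_sum_eq_one {ι : Type*} [Fintype ι] {w : ι → ℝ} (hw : ∀ i, 0 ≤ w i)
    (hw1 : ∑ i, w i = 1) (F : ι → ℝ) : ∃ i, F i ≤ ∑ j, w j * F j := by
  by_contra! h
  obtain ⟨i, -, hi⟩ : ∃ i ∈ univ, (0 : ℝ) < w i :=
    exists_lt_of_sum_lt (by simp [hw1] : ∑ _i : ι, (0 : ℝ) < ∑ i, w i)
  have hlt : ∑ j, w j * ∑ k, w k * F k < ∑ j, w j * F j :=
    sum_lt_sum (fun j _ => mul_le_mul_of_nonneg_left (h j).le (hw j))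
      ⟨i, mem_univ i, mul_lt_mul_of_pos_left (h i) hi⟩
  rw [← sum_mul, hw1, one_mul] at hlt
  exact hlt.false

theorem mul_exp_add_one_sub_le_exp {p y : ℝ} (hp : 0 ≤ p) (hy0 : 0 ≤ y) (hy1 : y ≤ 1) :
    p * Real.exp y + (1 - p) ≤ Real.exp (2 * p * y) := by
  have hexp : Real.exp y ≤ 1 + 2 * y := by
    have := Real.abs_exp_sub_one_le (x := y) (by rwa [abs_of_nonneg hy0])
    rw [abs_of_nonneg hy0] at this
    linarith [le_abs_self (Real.exp y - 1)]
  nlinarith [Real.add_one_le_exp (2 * p * y)]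

theorem two_pow_mul_exp_neg_le {s : ℕ} (hs : 0 < s) : 2 ^ s * Real.exp (-s) ≤ 3 / 4 := by
  have he : 2 * Real.exp (-1) ≤ 3 / 4 := by
    rw [Real.exp_neg, ← div_eq_mul_inv, div_le_iff₀ (Real.exp_pos 1)]
    linarith [Real.exp_one_gt_d9]
  calc (2 : ℝ) ^ s * Real.exp (-s) = (2 * Real.exp (-1)) ^ s := by
        rw [mul_pow, ← Real.exp_nat_mul]; ring_nf
    _ ≤ 2 * Real.exp (-1) := pow_le_of_le_one (by positivity) (by linarith) hs.ne'
    _ ≤ 3 / 4 := he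

section Bernoulli

variable {α : Type*} [Fintype α]

/-- The probability of the outcome `S` when each point of `α` is kept independently with
probability `p`. -/
noncomputable def bernoulliWeight (p : ℝ) (S : Finset α) : ℝ :=
  p ^ S.card * (1 - p) ^ (Fintype.card α - S.card)

theorem bernoulliWeight_nonneg {p : ℝ} (hp0 : 0 ≤ p) (hp1 : p ≤ 1) (S : Finset α) :
    0 ≤ bernoulliWeight p S := by
  have : 0 ≤ 1 - p := sub_nonneg.2 hp1
  unfold bernoulliWeight
  positivity

theorem sum_bernoulliWeight (p : ℝ) : ∑ S : Finset α, bernoulliWeight p S = 1 := by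
  simpa [bernoulliWeight] using Fintype.sum_pow_mul_eq_add_pow α p (1 - p)

theorem sum_bernoulliWeight_mul_prod [DecidableEq α] (p : ℝ) (g : α → ℝ) :
    ∑ S, bernoulliWeight p S * ∏ x ∈ S, g x = ∏ x, (p * g x + (1 - p)) := by
  rw [Fintype.prod_add]
  refine sum_congr rfl fun S _ => ?_
  rw [prod_mul_distrib, prod_const, prod_const, card_compl, bernoulliWeight]
  ring

theorem sum_bernoulliWeight_mul_exp_sum_le {p : ℝ} (hp : 0 ≤ p) {y : α → ℝ}
    (hy0 : ∀ x, 0 ≤ y x) (hy1 : ∀ x, y x ≤ 1) :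
    ∑ S, bernoulliWeight p S * Real.exp (∑ x ∈ S, y x) ≤ Real.exp (2 * p * ∑ x, y x) := by
  classical
  simp only [Real.exp_sum]
  rw [sum_bernoulliWeight_mul_prod, mul_sum, Real.exp_sum]
  refine prod_le_prod (fun x _ => ?_) (fun x _ => mul_exp_add_one_sub_le_exp hp (hy0 x) (hy1 x))
  nlinarith [Real.add_one_le_exp (y x), hy0 x]

theorem sum_bernoulliWeight_mul_two_pow_sub_card_le {s : ℕ} (hs : 0 < s)
    (hsN : s ≤ Fintype.card α) :
    ∑ S : Finset α, bernoulliWeight (2 * s / Fintype.card α) S * (2 ^ s * 2⁻¹ ^ S.card)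
      ≤ 3 / 4 := by
  classical
  set p : ℝ := 2 * s / Fintype.card α with hp
  have hN : (0 : ℝ) < Fintype.card α := by exact_mod_cast hs.trans_le hsN
  have hp2 : p ≤ 2 := by
    rw [hp, div_le_iff₀ hN]
    exact_mod_cast Nat.mul_le_mul_left 2 hsN
  have h := sum_bernoulliWeight_mul_prod (α := α) p fun _ => 2⁻¹
  simp only [prod_const, card_univ] at h
  have hpow : (p * 2⁻¹ + (1 - p)) ^ Fintype.card α ≤ Real.exp (-s) := by
    have hexp : Real.exp (-s) = Real.exp (-(p / 2)) ^ Fintype.card α := by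
      rw [← Real.exp_nat_mul, hp]
      field_simp
    rw [hexp]
    exact pow_le_pow_left₀ (by linarith) (by linarith [Real.one_sub_le_exp_neg (p / 2)]) _
  calc ∑ S : Finset α, bernoulliWeight p S * (2 ^ s * 2⁻¹ ^ S.card)
      = 2 ^ s * ∑ S : Finset α, bernoulliWeight p S * 2⁻¹ ^ S.card := by
        rw [mul_sum]; exact sum_congr rfl fun S _ => by ring
    _ ≤ 2 ^ s * Real.exp (-s) := by rw [h]; gcongr
    _ ≤ 3 / 4 := two_pow_mul_exp_neg_le hs

end Bernoulli

theorem exists_card_ge_forall_sum_le {α ι : Type*} [Fintype α] (I : Finset ι) (hI : I.Nonempty)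
    (y : ι → α → ℝ) (hy0 : ∀ i ∈ I, ∀ x, 0 ≤ y i x) (hy1 : ∀ i ∈ I, ∀ x, y i x ≤ 1) {s : ℕ}
    (hys : ∀ i ∈ I, ∑ x, y i x ≤ s) (hs : 0 < s) (hsN : 2 * s ≤ Fintype.card α) :
    ∃ S : Finset α, s ≤ S.card ∧ ∀ i ∈ I,
      ∑ x ∈ S, y i x ≤ Real.log (2 * I.card) + 4 * s ^ 2 / Fintype.card α := by
  set p : ℝ := 2 * s / Fintype.card α with hp
  have hN : (0 : ℝ) < Fintype.card α := by exact_mod_cast (by omega : 0 < Fintype.card α)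
  have hp0 : 0 ≤ p := by positivity
  have hp1 : p ≤ 1 := by
    rw [hp, div_le_one hN]
    exact_mod_cast hsN
  set B : ℝ := I.card * Real.exp (2 * p * s)
  have hB : 0 < B := by have := hI.card_pos; positivity
  -- The first part bounds each `∑ x ∈ S, y i x`, the second (`2 ^ (s - #S)`) the size of `S`.
  set F : Finset α → ℝ := fun S =>
    ∑ i ∈ I, Real.exp (∑ x ∈ S, y i x) + B * (2 ^ s * 2⁻¹ ^ S.card)
  have hF : ∑ S, bernoulliWeight p S * F S ≤ 7 / 4 * B := by
    have hfirst : ∑ S, bernoulliWeight p S * ∑ i ∈ I, Real.exp (∑ x ∈ S, y i x) ≤ B := by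
      simp only [mul_sum]
      rw [sum_comm]
      calc _ ≤ ∑ i ∈ I, Real.exp (2 * p * s) := sum_le_sum fun i hi =>
            (sum_bernoulliWeight_mul_exp_sum_le hp0 (hy0 i hi) (hy1 i hi)).trans
              (Real.exp_le_exp.2 (mul_le_mul_of_nonneg_left (hys i hi) (by positivity)))
        _ = B := by rw [sum_const, nsmul_eq_mul]
    have hsecond : ∑ S : Finset α, bernoulliWeight p S * (B * (2 ^ s * 2⁻¹ ^ S.card))
        ≤ B * (3 / 4) := by
      simp only [mul_left_comm _ B, ← mul_sum]
      exact mul_le_mul_of_nonneg_left (sum_bernoulliWeight_mul_two_pow_sub_card_le hs (by omega))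
        hB.le
    simp only [F, mul_add, sum_add_distrib]
    linarith
  obtain ⟨S, hS⟩ :=
    exists_le_sum_mul_of_sum_eq_one (bernoulliWeight_nonneg hp0 hp1) (sum_bernoulliWeight p) F
  have hFS : ∑ i ∈ I, Real.exp (∑ x ∈ S, y i x) + B * (2 ^ s * 2⁻¹ ^ S.card) ≤ 7 / 4 * B :=
    hS.trans hF
  have hexp_nonneg : 0 ≤ ∑ i ∈ I, Real.exp (∑ x ∈ S, y i x) :=
    sum_nonneg fun _ _ => (Real.exp_pos _).le
  have hcard : s ≤ S.card := by
    by_contra! h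
    have : 2 ≤ (2 : ℝ) ^ s * 2⁻¹ ^ S.card := by
      rw [inv_pow, ← pow_sub₀ (2 : ℝ) two_ne_zero h.le]
      exact le_self_pow₀ one_le_two (Nat.sub_ne_zero_of_lt h)
    nlinarith
  refine ⟨S, hcard, fun i hi => ?_⟩
  have hexp : Real.exp (∑ x ∈ S, y i x) ≤ Real.exp (Real.log (2 * I.card) + 2 * p * s) := by
    rw [Real.exp_add, Real.exp_log (by have := hI.card_pos; positivity)]
    have := single_le_sum (fun i _ => (Real.exp_pos (∑ x ∈ S, y i x)).le) hi
    have : 0 ≤ B * (2 ^ s * 2⁻¹ ^ S.card) := by positivity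
    linarith
  have h2ps : 2 * p * s = 4 * s ^ 2 / Fintype.card α := by rw [hp]; ring
  rw [← h2ps]
  exact Real.exp_le_exp.1 hexp

theorem exists_card_ge_forall_sum_min_le {α : Type*} [Fintype α] (𝒳 : Finset (α → ℝ))
    (h𝒳 : 𝒳.Nonempty) (hdist : ∀ X ∈ 𝒳, IsDist X) {s : ℕ} (hs : 0 < s)
    (hsN : 2 * s ≤ Fintype.card α) :
    ∃ S : Finset α, s ≤ S.card ∧ ∀ X ∈ 𝒳,
      s * ∑ x ∈ S, min (X x) (s : ℝ)⁻¹ ≤ Real.log (2 * 𝒳.card) + 4 * s ^ 2 / Fintype.card α := by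
  have hs' : (0 : ℝ) < s := by exact_mod_cast hs
  simp only [mul_sum]
  refine exists_card_ge_forall_sum_le 𝒳 h𝒳 (fun X x => s * min (X x) (s : ℝ)⁻¹)
    (fun X hX x => mul_nonneg hs'.le (le_min ((hdist X hX).1 x) (by positivity)))
    (fun X _ x => ?_) (fun X hX => ?_) hs hsN
  · calc (s : ℝ) * min (X x) (s : ℝ)⁻¹ ≤ s * (s : ℝ)⁻¹ := by gcongr; exact min_le_right _ _
      _ = 1 := mul_inv_cancel₀ hs'.ne'
  · calc ∑ x, (s : ℝ) * min (X x) (s : ℝ)⁻¹ ≤ ∑ x, s * X x := by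
          gcongr with x; exact min_le_left _ _
      _ = s := by rw [← mul_sum, (hdist X hX).2, mul_one]

theorem one_le_logb_two_natCast {M : ℕ} (hM : 2 ≤ M) : 1 ≤ Real.logb 2 M := by
  rw [Real.le_logb_iff_rpow_le one_lt_two (by positivity), Real.rpow_one]
  exact_mod_cast hM

theorem log_two_mul_le_two_mul_logb {M : ℕ} (hM : 2 ≤ M) :
    Real.log (2 * M) ≤ 2 * Real.logb 2 M := by
  have h1 := one_le_logb_two_natCast hM
  have hlog2 := Real.log_two_lt_d9
  have hlog2_pos := Real.log_pos one_lt_two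
  have hlogM : Real.log M = Real.logb 2 M * Real.log 2 := by
    rw [Real.logb, div_mul_cancel₀ _ hlog2_pos.ne']
  rw [Real.log_mul two_ne_zero (Nat.cast_ne_zero.2 (by omega)), hlogM]
  nlinarith

theorem exists_forall_tv_unifOn_ge {α : Type*} [Fintype α] [DecidableEq α]
    (𝒳 : Finset (α → ℝ)) (hM : 2 ≤ 𝒳.card) (hdist : ∀ X ∈ 𝒳, IsDist X)
    (hN : 16 * Real.logb 2 𝒳.card ≤ Fintype.card α) :
    ∃ S : Finset α, S.Nonempty ∧ ∀ X ∈ 𝒳,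
      1 - 10 * √(Real.logb 2 𝒳.card / Fintype.card α) ≤ tv X (unifOn S) := by
  set t := Real.logb 2 𝒳.card
  set N : ℝ := (Fintype.card α : ℝ)
  set v := √(t / N)
  have ht : 1 ≤ t := one_le_logb_two_natCast hM
  have hN0 : 0 < N := by linarith
  have htv : t = N * v ^ 2 := by
    rw [Real.sq_sqrt (by positivity), mul_div_cancel₀ _ hN0.ne']
  have hNv : 1 ≤ N * v := by
    have hsq : (N * v) ^ 2 = N * t := by rw [htv]; ring
    nlinarith [mul_nonneg hN0.le (Real.sqrt_nonneg (t / N))]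
  have hv : 4 * v ≤ 1 := by nlinarith [Real.sqrt_nonneg (t / N)]
  set s := ⌈N * v⌉₊
  have hs_ge : N * v ≤ s := Nat.le_ceil _
  have hs_le : (s : ℝ) ≤ 2 * (N * v) := by
    linarith [Nat.ceil_lt_add_one (by linarith : 0 ≤ N * v)]
  have hs : 0 < s := by exact_mod_cast hs_ge.trans_lt' (hNv.trans_lt' one_pos)
  have hsN : 2 * s ≤ Fintype.card α := by
    have : ((2 * s : ℕ) : ℝ) ≤ N := by push_cast; nlinarith
    exact Nat.cast_le.1 this
  obtain ⟨S, hSs, hS⟩ :=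
    exists_card_ge_forall_sum_min_le 𝒳 (card_pos.1 (by omega)) hdist hs hsN
  have hS0 : S.Nonempty := card_pos.1 (hs.trans_le hSs)
  refine ⟨S, hS0, fun X hX => ?_⟩
  rw [tv_unifOn_eq (hdist X hX) hS0]
  have hmin : ∑ x ∈ S, min (X x) (S.card : ℝ)⁻¹ ≤ ∑ x ∈ S, min (X x) (s : ℝ)⁻¹ :=
    sum_le_sum fun x _ => min_le_min_left _ (inv_anti₀ (by positivity) (by exact_mod_cast hSs))
  have hsum : (s : ℝ) * ∑ x ∈ S, min (X x) (s : ℝ)⁻¹ ≤ s * (10 * v) := by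
    have h := hS X hX
    change _ ≤ _ + 4 * (s : ℝ) ^ 2 / N at h
    have hlog := log_two_mul_le_two_mul_logb hM
    have h4 : 4 * (s : ℝ) ^ 2 / N ≤ 8 * s * v := by
      rw [div_le_iff₀ hN0]
      nlinarith
    nlinarith
  linarith [le_of_mul_le_mul_left hsum (by positivity)]

theorem sqrt_le_rpow_one_div_three {u : ℝ} (h0 : 0 ≤ u) (h1 : u ≤ 1) :
    √u ≤ u ^ ((1 : ℝ) / 3) := by
  rw [Real.sqrt_eq_rpow]
  exact Real.rpow_le_rpow_of_exponent_ge' h0 h1 (by norm_num) (by norm_num)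

theorem one_le_ten_mul_rpow_one_div_three {u : ℝ} (hu : (1 / 10) ^ 3 ≤ u) :
    1 ≤ 10 * u ^ ((1 : ℝ) / 3) := by
  have h10 : ((1 / 10 : ℝ) ^ 3) ^ ((1 : ℝ) / 3) = 1 / 10 := by
    rw [one_div (3 : ℝ)]
    exact_mod_cast Real.pow_rpow_inv_natCast (by norm_num : (0 : ℝ) ≤ 1 / 10) three_ne_zero
  have := Real.rpow_le_rpow (by norm_num) hu (by norm_num : (0 : ℝ) ≤ 1 / 3)
  linarith

theorem stmt18 : ∃ C : ℝ, 0 < C ∧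
    ∀ (n M : ℕ) (𝒳 : Finset ((Fin n → Bool) → ℝ)),
      𝒳.card = M → 2 ≤ M → (∀ X ∈ 𝒳, IsDist X) →
      ∃ S : Finset (Fin n → Bool), S.Nonempty ∧
        ∀ X ∈ 𝒳,
          1 - C * (Real.logb 2 M / (2 : ℝ) ^ n) ^ ((1 : ℝ) / 3)
            ≤ tv X (fun x => if x ∈ S then ((S.card : ℝ))⁻¹ else 0) := by
  refine ⟨10, by norm_num, fun n M 𝒳 hM hM2 hdist => ?_⟩
  subst hM
  have hcard : (Fintype.card (Fin n → Bool) : ℝ) = 2 ^ n := by simp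
  have ht := one_le_logb_two_natCast hM2
  by_cases hsmall : 16 * Real.logb 2 𝒳.card ≤ Fintype.card (Fin n → Bool)
  · obtain ⟨S, hS, hX⟩ := exists_forall_tv_unifOn_ge 𝒳 hM2 hdist hsmall
    rw [hcard] at hsmall hX
    have hu1 : Real.logb 2 𝒳.card / 2 ^ n ≤ 1 := by
      rw [div_le_one (by positivity)]
      linarith
    have := sqrt_le_rpow_one_div_three (by positivity) hu1
    exact ⟨S, hS, fun X h => (hX X h).trans' (by linarith)⟩
  · rw [hcard, not_le] at hsmall
    have hu : (1 / 10) ^ 3 ≤ Real.logb 2 𝒳.card / 2 ^ n := by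
      rw [le_div_iff₀ (by positivity)]
      linarith
    have := one_le_ten_mul_rpow_one_div_three hu
    exact ⟨univ, univ_nonempty, fun X _ => (tv_nonneg X _).trans' (by linarith)⟩
end
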